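/- arXiv:2605.07853 — 2 statements merged into one kernel-verified Lean document; each statement's English description precedes it below -/
import Mathlib

section
/- The assignment {f_i} ↦ Φ_Γ is functorial: if f_i : G_i → G'_i and f'_i : G'_i → G''_i are set maps preserving identities, then the homomorphism K_Γ → K''_Γ induced by the compositions {f'_i ∘ f_i} equals the composition of the homomorphisms induced by {f_i} and {f'_i}; moreover, the identity set maps induce the identity homomorphism on K_Γ. -/
open Monoid
open scoped commutatorElement

namespace GPaper

variable {ι : Type*}

/-- The relator subgroup of the graph product: normal closure of commutators of
elements of vertex groups at adjacent vertices. -/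
def Rels (Γ : SimpleGraph ι) (G : ι → Type*) [∀ i, Group (G i)] : Subgroup (Monoid.CoprodI G) :=
  Subgroup.normalClosure
    { x | ∃ (i j : ι) (g : G i) (h : G j), Γ.Adj i j ∧
          x = ⁅Monoid.CoprodI.of g, Monoid.CoprodI.of h⁆ }

instance (Γ : SimpleGraph ι) (G : ι → Type*) [∀ i, Group (G i)] : (Rels Γ G).Normal :=
  Subgroup.normalClosure_normal

/-- The graph product of the groups `G i` over the simplicial graph `Γ`. -/
abbrev GP (Γ : SimpleGraph ι) (G : ι → Type*) [∀ i, Group (G i)] :=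
  Monoid.CoprodI G ⧸ Rels Γ G

/-- The canonical inclusion of a vertex group into the graph product. -/
def of (Γ : SimpleGraph ι) (G : ι → Type*) [∀ i, Group (G i)] (i : ι) : G i →* GP Γ G :=
  (QuotientGroup.mk' (Rels Γ G)).comp Monoid.CoprodI.of

/-- The canonical homomorphism from the graph product to the direct product. -/
def proj [DecidableEq ι] (Γ : SimpleGraph ι) (G : ι → Type*) [∀ i, Group (G i)] :
    GP Γ G →* (∀ i, G i) :=
  QuotientGroup.lift (Rels Γ G) (Monoid.CoprodI.lift (fun i => MonoidHom.mulSingle G i)) (by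
    intro x hx
    refine Subgroup.normalClosure_le_normal ?_ hx
    rintro y ⟨i, j, g, h, hadj, rfl⟩
    have hij : i ≠ j := hadj.ne
    simp only [SetLike.mem_coe, MonoidHom.mem_ker, map_commutatorElement,
      Monoid.CoprodI.lift_of]
    rw [commutatorElement_eq_one_iff_commute]
    exact Pi.mulSingle_commute hij g h)

/-- The canonical epimorphism `G_Γ → G_Γ'` when `Γ'` is obtained from `Γ` by adding edges. -/
def mapGraph (Γ Γ' : SimpleGraph ι) (hΓ : Γ ≤ Γ') (G : ι → Type*) [∀ i, Group (G i)] :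
    GP Γ G →* GP Γ' G :=
  QuotientGroup.lift (Rels Γ G) (QuotientGroup.mk' (Rels Γ' G)) (by
    intro x hx
    rw [QuotientGroup.ker_mk']
    refine Subgroup.normalClosure_le_normal ?_ hx
    rintro y ⟨i, j, g, h, hadj, rfl⟩
    exact Subgroup.subset_normalClosure ⟨i, j, g, h, hΓ hadj, rfl⟩)

/-- The element of the graph product represented by a word (list of syllables). -/
def wordProd (Γ : SimpleGraph ι) (G : ι → Type*) [∀ i, Group (G i)]
    (w : List (Σ i, G i)) : GP Γ G :=
  (w.map fun s => of Γ G s.1 s.2).prod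

/-- The image of a word in the direct product of the vertex groups. -/
def piProd [DecidableEq ι] (G : ι → Type*) [∀ i, Group (G i)]
    (w : List (Σ i, G i)) : ∀ i, G i :=
  (w.map fun s => Pi.mulSingle s.1 s.2).prod

/-- The ordered product of those syllables of a word that belong to `G i`. -/
def sylProd [DecidableEq ι] (G : ι → Type*) [∀ i, Group (G i)]
    (w : List (Σ i, G i)) (i : ι) : G i :=
  (w.filterMap fun s => if h : s.1 = i then some (cast (congrArg G h) s.2) else none).prod

/-- The normal (syllable) length of an element of a graph product:
the minimal number of syllables in a word representing it. -/
noncomputable def nl (Γ : SimpleGraph ι) (G : ι → Type*) [∀ i, Group (G i)]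
    (g : GP Γ G) : ℕ :=
  sInf { n | ∃ w : List (Σ i, G i), wordProd Γ G w = g ∧ w.length = n }

section Phi

open scoped Classical

variable [DecidableEq ι] {G G' : ι → Type*} [∀ i, Group (G i)] [∀ i, Group (G' i)]

/-- One step of the recursive construction of `Φ`: the new syllable
`f(π(w))⁻¹ · f(π(w)s)` (dropped if trivial), where `g = π(w)`. -/
noncomputable def phiStep (f : ∀ i, G i → G' i) (g : ∀ i, G i) (s : Σ i, G i) : List (Σ i, G' i) :=
  if (f s.1 (g s.1))⁻¹ * f s.1 (g s.1 * s.2) = 1 then []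
  else [⟨s.1, (f s.1 (g s.1))⁻¹ * f s.1 (g s.1 * s.2)⟩]

/-- Auxiliary recursion: process the word left to right, carrying the
image `g` of the prefix in the direct product. -/
noncomputable def phiAux (f : ∀ i, G i → G' i) : (∀ i, G i) → List (Σ i, G i) → List (Σ i, G' i)
  | _, [] => []
  | g, s :: w => phiStep f g s ++ phiAux f (g * Pi.mulSingle s.1 s.2) w

/-- The word map `Φ : S* → S'*` induced by the set maps `f i : G i → G' i`. -/
noncomputable def phiWord (f : ∀ i, G i → G' i) (w : List (Σ i, G i)) : List (Σ i, G' i) :=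
  phiAux f 1 w

end Phi

/-! The syllable produced by `f'` from the syllable `f(a)⁻¹ f(b)` of `Φ_f` telescopes to
`f'(f a)⁻¹ f'(f b)`, and the prefix images carried along by `Φ_f'` are the images under `f` of
those carried by `Φ_f`; so `Φ_{f' ∘ f} = Φ_{f'} ∘ Φ_f` already on words, as soon as `f` sends the
initial prefix image `1` to `1`. For identity maps every syllable is reproduced or, when trivial,
dropped. -/

section Functoriality

variable {G G' G'' : ι → Type*} [∀ i, Group (G i)] [∀ i, Group (G' i)] [∀ i, Group (G'' i)]

lemma wordProd_append (Γ : SimpleGraph ι) (u v : List (Σ i, G i)) :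
    wordProd Γ G (u ++ v) = wordProd Γ G u * wordProd Γ G v := by
  simp [wordProd]

lemma wordProd_phiStep_id (Γ : SimpleGraph ι) (g : ∀ i, G i) (s : Σ i, G i) :
    wordProd Γ G (phiStep (fun _ x => x) g s) = of Γ G s.1 s.2 := by
  unfold phiStep
  split_ifs with h
  · simp_all [wordProd]
  · simp [wordProd]

variable [DecidableEq ι]

lemma piProd_cons (s : Σ i, G i) (w : List (Σ i, G i)) :
    piProd G (s :: w) = Pi.mulSingle s.1 s.2 * piProd G w := by
  simp [piProd]

lemma phiAux_append (f : ∀ i, G i → G' i) (u v : List (Σ i, G i)) (g : ∀ i, G i) :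
    phiAux f g (u ++ v) = phiAux f g u ++ phiAux f (g * piProd G u) v := by
  induction u generalizing g with
  | nil => simp [phiAux, piProd]
  | cons s u ih => simp [phiAux, ih, piProd_cons, mul_assoc]

lemma piProd_phiStep (f : ∀ i, G i → G' i) (g : ∀ i, G i) (s : Σ i, G i) :
    piProd G' (phiStep f g s) =
      Pi.mulSingle s.1 ((f s.1 (g s.1))⁻¹ * f s.1 (g s.1 * s.2)) := by
  unfold phiStep
  split_ifs with h
  · simp [piProd, h]
  · simp [piProd]

lemma comp_mul_piProd_phiStep (f : ∀ i, G i → G' i) (g : ∀ i, G i) (s : Σ i, G i) :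
    (fun i => f i (g i)) * piProd G' (phiStep f g s) =
      fun i => f i ((g * Pi.mulSingle s.1 s.2) i) := by
  funext j
  rw [piProd_phiStep]
  obtain ⟨i, x⟩ := s
  by_cases hj : j = i
  · subst hj
    simp
  · simp [Pi.mulSingle_eq_of_ne hj]

lemma phiAux_phiStep (f : ∀ i, G i → G' i) (f' : ∀ i, G' i → G'' i) (g : ∀ i, G i)
    (s : Σ i, G i) :
    phiAux f' (fun i => f i (g i)) (phiStep f g s) = phiStep (fun i => f' i ∘ f i) g s := by
  obtain ⟨i, x⟩ := s
  by_cases h : (f i (g i))⁻¹ * f i (g i * x) = 1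
  · have hx : f i (g i * x) = f i (g i) := (inv_mul_eq_one.mp h).symm
    simp [phiStep, phiAux, hx]
  · simp only [phiStep, if_neg h, phiAux, List.append_nil, Function.comp_apply]
    rw [mul_inv_cancel_left]

lemma phiAux_comp (f : ∀ i, G i → G' i) (f' : ∀ i, G' i → G'' i) (w : List (Σ i, G i))
    (g : ∀ i, G i) :
    phiAux f' (fun i => f i (g i)) (phiAux f g w) = phiAux (fun i => f' i ∘ f i) g w := by
  induction w generalizing g with
  | nil => rfl
  | cons s w ih =>
    rw [phiAux, phiAux, phiAux_append, phiAux_phiStep, comp_mul_piProd_phiStep, ih]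

theorem phiWord_comp (f : ∀ i, G i → G' i) (f' : ∀ i, G' i → G'' i) (hf : ∀ i, f i 1 = 1)
    (w : List (Σ i, G i)) :
    phiWord (fun i => f' i ∘ f i) w = phiWord f' (phiWord f w) := by
  have hf1 : (fun i => f i ((1 : ∀ i, G i) i)) = 1 := funext hf
  rw [phiWord, phiWord, phiWord, ← phiAux_comp f f' w 1, hf1]

lemma wordProd_phiAux_id (Γ : SimpleGraph ι) (w : List (Σ i, G i)) (g : ∀ i, G i) :
    wordProd Γ G (phiAux (fun _ x => x) g w) = wordProd Γ G w := by
  induction w generalizing g with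
  | nil => rfl
  | cons s w ih =>
    rw [phiAux, wordProd_append, wordProd_phiStep_id, ih, ← List.singleton_append,
      wordProd_append]
    simp [wordProd]

end Functoriality

theorem stmt4_general {ι : Type*} [DecidableEq ι] (Γ : SimpleGraph ι)
    (G G' G'' : ι → Type*) [∀ i, Group (G i)] [∀ i, Group (G' i)] [∀ i, Group (G'' i)]
    (f : ∀ i, G i → G' i) (f' : ∀ i, G' i → G'' i)
    (hf : ∀ i, f i 1 = 1) :
    (∀ w : List (Σ i, G i), wordProd Γ G w ∈ (proj Γ G).ker →
        wordProd Γ G'' (phiWord (fun i => f' i ∘ f i) w) =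
          wordProd Γ G'' (phiWord f' (phiWord f w))) ∧
    (∀ w : List (Σ i, G i), wordProd Γ G w ∈ (proj Γ G).ker →
        wordProd Γ G (phiWord (fun _ x => x) w) = wordProd Γ G w) :=
  ⟨fun w _ => by rw [phiWord_comp f f' hf],
    fun w _ => wordProd_phiAux_id Γ w 1⟩

/-- Functoriality of `{f_i} ↦ Φ_Γ` on the kernel: compositions of
identity-preserving set maps induce the composition of the induced maps, and the
identity set maps induce the identity. (Stated at the level of representing words.) -/
theorem stmt4 {ι : Type*} [DecidableEq ι] [Fintype ι] (Γ : SimpleGraph ι)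
    (G G' G'' : ι → Type*) [∀ i, Group (G i)] [∀ i, Group (G' i)] [∀ i, Group (G'' i)]
    (f : ∀ i, G i → G' i) (f' : ∀ i, G' i → G'' i)
    (hf : ∀ i, f i 1 = 1) (hf' : ∀ i, f' i 1 = 1) :
    (∀ w : List (Σ i, G i), wordProd Γ G w ∈ (proj Γ G).ker →
        wordProd Γ G'' (phiWord (fun i => f' i ∘ f i) w) =
          wordProd Γ G'' (phiWord f' (phiWord f w))) ∧
    (∀ w : List (Σ i, G i), wordProd Γ G w ∈ (proj Γ G).ker →
        wordProd Γ G (phiWord (fun _ x => x) w) = wordProd Γ G w) :=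
  stmt4_general Γ G G' G'' f f' hf

end GPaper
end

section
/- Let Γ be a finite simplicial graph, and suppose each vertex group G_i is countably infinite. Then the kernel K_Γ of the canonical map G_Γ → ∏ G_i is isomorphic to the commutator subgroup [A_Γ, A_Γ] of the right-angled Artin group A_Γ on Γ. -/
/-!
Set maps `f i : G i → G' i` between vertex groups induce a homomorphism from `G_Γ` into the
wreath product `(∏ G i → G'_Γ) ⋊ ∏ G i`, sending `a ∈ G i` to translation by `a` together
with the cocycle `g ↦ f (g i)⁻¹ f (g i a)`. Reading off the cocycle at the base point `1`
is multiplicative on the kernel `K_Γ` and lands in `K'_Γ`; if the `f i` are bijections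
fixing `1`, the maps for `f` and `f⁻¹` are mutually inverse. So `K_Γ` only depends on the
vertex groups as pointed sets, and for countably infinite vertex groups it is the kernel for
`A_Γ`, which is `[A_Γ, A_Γ]` because `∏ ℤ` is the abelianization of `A_Γ`.
-/

open Monoid
open scoped commutatorElement

namespace GPaper

variable {ι : Type*}

section GraphProduct

variable {Γ : SimpleGraph ι} {G : ι → Type*} [∀ i, Group (G i)]

theorem of_commute {i j : ι} (h : Γ.Adj i j) (a : G i) (b : G j) :
    Commute (of Γ G i a) (of Γ G j b) := by
  rw [← commutatorElement_eq_one_iff_commute]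
  change QuotientGroup.mk' _ ⁅CoprodI.of a, CoprodI.of b⁆ = 1
  rw [QuotientGroup.mk'_apply, QuotientGroup.eq_one_iff]
  exact Subgroup.subset_normalClosure ⟨i, j, a, b, h, rfl⟩

def lift {M : Type*} [Group M] (φ : ∀ i, G i →* M)
    (hφ : ∀ i j, Γ.Adj i j → ∀ a b, Commute (φ i a) (φ j b)) : GP Γ G →* M :=
  QuotientGroup.lift (Rels Γ G) (CoprodI.lift φ) (by
    refine fun x hx => Subgroup.normalClosure_le_normal ?_ hx
    rintro _ ⟨i, j, a, b, hadj, rfl⟩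
    simp only [SetLike.mem_coe, MonoidHom.mem_ker, map_commutatorElement, CoprodI.lift_of,
      commutatorElement_eq_one_iff_commute]
    exact hφ i j hadj a b)

@[simp]
theorem lift_of {M : Type*} [Group M] (φ : ∀ i, G i →* M)
    (hφ : ∀ i j, Γ.Adj i j → ∀ a b, Commute (φ i a) (φ j b)) (i : ι) (a : G i) :
    lift φ hφ (of Γ G i a) = φ i a := by
  simp [lift, of]

theorem hom_ext {M : Type*} [Monoid M] {φ ψ : GP Γ G →* M}
    (h : ∀ i, φ.comp (of Γ G i) = ψ.comp (of Γ G i)) : φ = ψ :=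
  QuotientGroup.monoidHom_ext _ (CoprodI.ext_hom _ _ h)

@[elab_as_elim]
theorem induction_on {P : GP Γ G → Prop} (x : GP Γ G) (one : P 1)
    (of : ∀ i a, P (of Γ G i a)) (mul : ∀ x y, P x → P y → P (x * y)) : P x := by
  induction x using QuotientGroup.induction_on with
  | H y =>
    induction y using CoprodI.induction_on with
    | one => exact one
    | of i a => exact of i a
    | mul y z hy hz => exact mul _ _ hy hz

@[simp]
theorem proj_of [DecidableEq ι] (i : ι) (a : G i) :
    proj Γ G (of Γ G i a) = Pi.mulSingle i a := by
  simp [proj, of]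

end GraphProduct

def rightTranslate (P H : Type*) [Group P] [Mul H] : P →* MulAut (P → H) where
  toFun p :=
    { toFun := fun c g => c (g * p)
      invFun := fun c g => c (g * p⁻¹)
      left_inv := fun c => by simp
      right_inv := fun c => by simp
      map_mul' := fun _ _ => rfl }
  map_one' := by ext; simp
  map_mul' _ _ := by ext; simp [mul_assoc]

section Twist

variable [DecidableEq ι] {Γ : SimpleGraph ι} {G G' : ι → Type*} [∀ i, Group (G i)]
  [∀ i, Group (G' i)]

def twistOf (f : ∀ i, G i → G' i) (i : ι) :
    G i →* ((∀ i, G i) → GP Γ G') ⋊[rightTranslate _ _] (∀ i, G i) where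
  toFun a := ⟨fun g => of Γ G' i ((f i (g i))⁻¹ * f i (g i * a)), Pi.mulSingle i a⟩
  map_one' := SemidirectProduct.ext (funext fun g => by simp) (Pi.mulSingle_one i)
  map_mul' a b := by
    refine SemidirectProduct.ext (funext fun g => ?_) (Pi.mulSingle_mul i a b)
    change _ = of Γ G' i _ * of Γ G' i ((f i ((g * Pi.mulSingle i a) i))⁻¹ *
      f i ((g * Pi.mulSingle i a) i * b))
    rw [← map_mul, Pi.mul_apply, Pi.mulSingle_eq_same, mul_assoc, mul_inv_cancel_left, mul_assoc]

theorem twistOf_commute (f : ∀ i, G i → G' i) {i j : ι} (hij : Γ.Adj i j)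
    (a : G i) (b : G j) :
    Commute (twistOf (Γ := Γ) f i a) (twistOf f j b) := by
  have hne : i ≠ j := hij.ne
  refine SemidirectProduct.ext (funext fun g => ?_) (Pi.mulSingle_commute hne a b)
  change of Γ G' i _ * of Γ G' j
      ((f j ((g * Pi.mulSingle i a) j))⁻¹ * f j ((g * Pi.mulSingle i a) j * b)) =
    of Γ G' j _ * of Γ G' i
      ((f i ((g * Pi.mulSingle j b) i))⁻¹ * f i ((g * Pi.mulSingle j b) i * a))
  rw [Pi.mul_apply, Pi.mul_apply, Pi.mulSingle_eq_of_ne hne.symm, Pi.mulSingle_eq_of_ne hne,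
    mul_one, mul_one]
  exact of_commute hij _ _

def twist (f : ∀ i, G i → G' i) :
    GP Γ G →* ((∀ i, G i) → GP Γ G') ⋊[rightTranslate _ _] (∀ i, G i) :=
  lift (twistOf f) fun _ _ hij => twistOf_commute f hij

variable (f : ∀ i, G i → G' i)

theorem twist_of (i : ι) (a : G i) : twist (Γ := Γ) f (of Γ G i a) = twistOf f i a :=
  lift_of _ _ i a

theorem twist_right (x : GP Γ G) : (twist f x).right = proj Γ G x := by
  suffices SemidirectProduct.rightHom.comp (twist f) = proj Γ G from DFunLike.congr_fun this x
  refine hom_ext fun i => MonoidHom.ext fun a => ?_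
  simp only [MonoidHom.comp_apply, twist_of, proj_of, SemidirectProduct.rightHom_eq_right]
  rfl

theorem twist_mul_left (x y : GP Γ G) (g : ∀ i, G i) :
    (twist f (x * y)).left g = (twist f x).left g * (twist f y).left (g * proj Γ G x) := by
  rw [map_mul, SemidirectProduct.mul_left, twist_right]
  rfl

theorem proj_twist_left (x : GP Γ G) (g : ∀ i, G i) :
    proj Γ G' ((twist f x).left g) = fun i => (f i (g i))⁻¹ * f i (g i * proj Γ G x i) := by
  induction x using induction_on generalizing g with
  | one => funext i; simp [SemidirectProduct.one_left]
  | of i a =>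
    funext j
    rw [twist_of, proj_of]
    change proj Γ G' (of Γ G' i _) j = _
    rw [proj_of]
    rcases eq_or_ne i j with rfl | hne
    · simp
    · simp [Pi.mulSingle_eq_of_ne' hne]
  | mul x y hx hy =>
    funext i
    rw [twist_mul_left, map_mul, hx, hy, map_mul]
    simp only [Pi.mul_apply, mul_assoc, mul_inv_cancel_left]

theorem twist_left_twist_left {f' : ∀ i, G' i → G i} (hf : ∀ i a, f' i (f i a) = a)
    (x : GP Γ G) (g : ∀ i, G i) :
    (twist f' ((twist f x).left g)).left (fun i => f i (g i)) = x := by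
  induction x using induction_on generalizing g with
  | one => simp [SemidirectProduct.one_left]
  | of i a =>
    rw [twist_of]
    change (twist f' (of Γ G' i _)).left _ = _
    rw [twist_of]
    change of Γ G i ((f' i (f i (g i)))⁻¹ * f' i (f i (g i) * _)) = _
    rw [mul_inv_cancel_left, hf, hf, inv_mul_cancel_left]
  | mul x y hx hy =>
    have hcarry : (fun i => f i (g i)) * proj Γ G' ((twist f x).left g) =
        fun i => f i ((g * proj Γ G x) i) := by
      funext i
      simp [proj_twist_left]
    rw [twist_mul_left, twist_mul_left, hx, hcarry, hy]

theorem twist_left_one_mem_ker {x : GP Γ G} (hx : x ∈ (proj Γ G).ker) :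
    (twist f x).left 1 ∈ (proj Γ G').ker := by
  rw [MonoidHom.mem_ker, proj_twist_left, MonoidHom.mem_ker.mp hx]
  funext i
  simp

theorem twist_left_one_mul {x : GP Γ G} (hx : x ∈ (proj Γ G).ker) (y : GP Γ G) :
    (twist f (x * y)).left 1 = (twist f x).left 1 * (twist f y).left 1 := by
  rw [twist_mul_left, MonoidHom.mem_ker.mp hx, one_mul]

def kerProjEquiv (e : ∀ i, G i ≃ G' i) (he : ∀ i, e i 1 = 1) :
    (proj Γ G).ker ≃* (proj Γ G').ker where
  toFun x := ⟨(twist (fun i => e i) x.1).left 1, twist_left_one_mem_ker _ x.2⟩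
  invFun y := ⟨(twist (fun i => (e i).symm) y.1).left 1, twist_left_one_mem_ker _ y.2⟩
  left_inv x := Subtype.ext <| by
    have h := twist_left_twist_left _ (fun i => (e i).symm_apply_apply) x.1 1
    rwa [show (fun i => e i ((1 : ∀ i, G i) i)) = 1 from funext he] at h
  right_inv y := Subtype.ext <| by
    have h := twist_left_twist_left _ (fun i => (e i).apply_symm_apply) y.1 1
    rwa [show (fun i => (e i).symm ((1 : ∀ i, G' i) i)) = 1 from
      funext fun i => (e i).symm_apply_eq.mpr (he i).symm] at h
  map_mul' x y := Subtype.ext (twist_left_one_mul _ x.2 y.1)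

end Twist

theorem ker_proj_eq_commutator [DecidableEq ι] [Fintype ι] (Γ : SimpleGraph ι)
    (G : ι → Type*) [∀ i, CommGroup (G i)] : (proj Γ G).ker = commutator (GP Γ G) := by
  let toAb : (∀ i, G i) →* Abelianization (GP Γ G) :=
    MonoidHom.noncommPiCoprod (fun i => Abelianization.of.comp (of Γ G i))
      fun _ _ _ _ _ => Commute.all _ _
  have h : toAb.comp (proj Γ G) = Abelianization.of :=
    hom_ext fun i => MonoidHom.ext fun a => by
      simp only [MonoidHom.comp_apply, proj_of]
      exact MonoidHom.noncommPiCoprod_mulSingle _ i a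
  refine le_antisymm (fun x hx => ?_) (Abelianization.commutator_subset_ker _)
  rw [← Abelianization.ker_of, ← h, MonoidHom.mem_ker, MonoidHom.comp_apply,
    MonoidHom.mem_ker.mp hx, map_one]

theorem exists_equiv_apply_eq {α β : Type*} [DecidableEq β] (e : α ≃ β) (a : α) (b : β) :
    ∃ e' : α ≃ β, e' a = b :=
  ⟨e.trans (Equiv.swap (e a) b), by simp⟩

/-- If each vertex group is countably infinite, the kernel `K_Γ` is
isomorphic to the commutator subgroup of the right-angled Artin group on `Γ`
(the graph product with every vertex group `ℤ`). -/
theorem stmt10 {ι : Type*} [DecidableEq ι] [Fintype ι] (Γ : SimpleGraph ι)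
    (G : ι → Type*) [∀ i, Group (G i)] [∀ i, Countable (G i)] [∀ i, Infinite (G i)] :
    Nonempty ((proj Γ G).ker ≃* commutator (GP Γ (fun _ : ι => Multiplicative ℤ))) := by
  have he : ∀ i, ∃ e : G i ≃ Multiplicative ℤ, e 1 = 1 := fun i =>
    exists_equiv_apply_eq nonempty_equiv_of_countable.some 1 1
  choose e he using he
  exact ⟨(kerProjEquiv e he).trans (MulEquiv.subgroupCongr (ker_proj_eq_commutator Γ _))⟩

end GPaper
end
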